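/- For all s, s′ ∈ B with s ≺ s′, the intersection of the closed intervals [τ(s), τ(s + ⟨1⟩)] and [τ(s′), τ(s′ + ⟨1⟩)] is either empty or equal to the singleton {τ(s′)}. -/

import Mathlib

/-!
`τ` is monotone for `⪯`: it sums the nonnegative weights `λ (ℓ t)` over the initial segment
`{t ∈ B | t ≺ s}`, and the sum converges because `B_n` has `n!` elements, so the weights of `B_n`
add up to `2⁻ⁿ`. Moreover `s ⪯ s + ⟨1⟩`, and `s ≺ s'` forces `s + ⟨1⟩ ⪯ s'`. Hence
`τ s ≤ τ (s + ⟨1⟩) ≤ τ s' ≤ τ (s' + ⟨1⟩)`, and two closed intervals placed in this way meet at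
most in the common endpoint `τ s'`.
-/

/-- The `j`-th entry (1-indexed) of a finite sequence of positive naturals,
viewed as a natural number. Only used for `1 ≤ j ≤ s.length`. -/
def nthSeq (s : List ℕ+) (j : ℕ) : ℕ := ↑(s.getD (j - 1) 1)

/-- The linear order `⪯` on finite sequences of positive natural numbers:
`s ⪯ t` iff either (a) there is an index `j ≤ min (ℓ s) (ℓ t)` which is the first index where
`s` and `t` differ, and there `s j < t j`, or (b) `ℓ s ≤ ℓ t` and `t` extends `s`. -/
def sle (s t : List ℕ+) : Prop :=
  (∃ j, 1 ≤ j ∧ j ≤ min s.length t.length ∧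
     (∀ i, 1 ≤ i → i < j → nthSeq s i = nthSeq t i) ∧ nthSeq s j < nthSeq t j) ∨
  (s.length ≤ t.length ∧ ∀ j, 1 ≤ j → j ≤ s.length → nthSeq s j = nthSeq t j)

/-- The strict version `≺` of the order `⪯`. -/
def slt (s t : List ℕ+) : Prop := sle s t ∧ s ≠ t

/-- The set `B` of nonempty sequences `s` with `s i ≤ i` for all `1 ≤ i ≤ ℓ s`. -/
def BSet : Set (List ℕ+) := {s | 1 ≤ s.length ∧ ∀ i, 1 ≤ i → i ≤ s.length → nthSeq s i ≤ i}

/-- `λ n = 1 / (2^n n!)`. -/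
noncomputable def lam (n : ℕ) : ℝ := 1 / ((2 : ℝ) ^ n * (n.factorial : ℝ))

/-- `τ s = Σ_{t ∈ B, t ≺ s} λ (ℓ t)`. -/
noncomputable def tau (s : List ℕ+) : ℝ :=
  ∑' t : {t : List ℕ+ // t ∈ BSet ∧ slt t s}, lam t.1.length

lemma nthSeq_succ (s : List ℕ+) {i : ℕ} (hi : i < s.length) : nthSeq s (i + 1) = s[i] := by
  simp [nthSeq, List.getElem?_eq_getElem hi]

theorem sle_iff_le {s t : List ℕ+} : sle s t ↔ s ≤ t := by
  -- from Mathlib's `≤` on lists (`List.LE'`) to core's (`List.instLE`), which the `List` API uses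
  rw [le_iff_lt_or_eq, ← List.le_iff_lt_or_eq, List.le_iff_exists, ← List.prefix_iff_eq_take,
    List.prefix_iff_getElem, sle, or_comm]
  refine or_congr ⟨?_, ?_⟩ ⟨?_, ?_⟩
  · rintro ⟨hlen, heq⟩
    refine ⟨hlen, fun i hi => PNat.coe_inj.mp ?_⟩
    simpa [nthSeq_succ, hi, hi.trans_le hlen] using heq (i + 1) (by omega) (by omega)
  · rintro ⟨hlen, heq⟩
    refine ⟨hlen, ?_⟩
    rintro (_ | i) h1 h2
    · omega
    · rw [nthSeq_succ s (by omega), nthSeq_succ t (by omega), heq]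
  · rintro ⟨_ | i, h1, hmin, heq, hlt⟩
    · omega
    · rw [le_min_iff] at hmin
      refine ⟨i, by omega, by omega, fun j hj => PNat.coe_inj.mp ?_, ?_⟩
      · simpa [nthSeq_succ, hj.trans (Nat.lt_of_succ_le hmin.1),
          hj.trans (Nat.lt_of_succ_le hmin.2)] using heq (j + 1) (by omega) (by omega)
      · simpa [nthSeq_succ, Nat.lt_of_succ_le hmin.1, Nat.lt_of_succ_le hmin.2] using hlt
  · rintro ⟨i, h1, h2, heq, hlt⟩
    refine ⟨i + 1, by omega, le_min h1 h2, fun j hj1 hj2 => ?_, ?_⟩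
    · obtain ⟨j, rfl⟩ : ∃ k, j = k + 1 := ⟨j - 1, by omega⟩
      rw [nthSeq_succ s (by omega), nthSeq_succ t (by omega), heq j (by omega)]
    · rw [nthSeq_succ s h1, nthSeq_succ t h2]
      exact_mod_cast hlt

theorem List.le_self_append {α : Type*} [LinearOrder α] (s t : List α) : s ≤ s ++ t :=
  not_lt.mp (List.prefix_append s t).le

theorem slt_iff_lt {s t : List ℕ+} : slt s t ↔ s < t := by
  rw [slt, sle_iff_le, lt_iff_le_and_ne]

theorem append_one_le_of_lt {s t : List ℕ+} (h : s < t) : s ++ [1] ≤ t := by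
  rw [le_iff_lt_or_eq, ← List.le_iff_lt_or_eq]
  induction s generalizing t with
  | nil =>
    obtain ⟨a, r, rfl⟩ := List.exists_cons_of_ne_nil
      (show t ≠ [] by rintro rfl; exact List.not_lt_nil _ h)
    rcases (one_le : 1 ≤ a).lt_or_eq with ha | ha
    · exact List.cons_le_cons_iff.mpr (.inl ha)
    · exact List.cons_le_cons_iff.mpr (.inr ⟨ha, List.nil_le r⟩)
  | cons x s ih =>
    obtain ⟨y, r, rfl⟩ := List.exists_cons_of_ne_nil
      (show t ≠ [] by rintro rfl; exact List.not_lt_nil _ h)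
    rcases List.cons_lt_cons_iff.mp h with hxy | ⟨rfl, hsr⟩
    · exact List.cons_le_cons_iff.mpr (.inl hxy)
    · exact List.cons_le_cons_iff.mpr (.inr ⟨rfl, ih hsr⟩)

lemma lam_nonneg (n : ℕ) : 0 ≤ lam n := by
  unfold lam
  positivity

lemma card_pi_fin_succ_eq_factorial (n : ℕ) :
    Fintype.card (∀ i : Fin n, Fin (i + 1)) = n.factorial := by
  simp [Fintype.card_pi, Fin.prod_univ_eq_prod_range (· + 1),
    Finset.prod_range_add_one_eq_factorial]

lemma summable_lam_fst : Summable fun p : Σ n, ∀ i : Fin n, Fin (i + 1) => lam p.1 := by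
  refine (summable_sigma_of_nonneg fun p => lam_nonneg p.1).mpr
    ⟨fun _ => .of_finite, ?_⟩
  convert summable_geometric_two using 1
  funext n
  simp only [tsum_fintype, Finset.sum_const, Finset.card_univ, card_pi_fin_succ_eq_factorial,
    nsmul_eq_mul, lam]
  field_simp
  rw [← mul_pow]
  norm_num

def decodeBSet (p : Σ n, ∀ i : Fin n, Fin (i + 1)) : List ℕ+ :=
  List.ofFn fun i => (p.2 i : ℕ).succPNat

lemma natPred_getElem_lt_of_mem_BSet {t : List ℕ+} (ht : t ∈ BSet) {i : ℕ} (hi : i < t.length) :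
    t[i].natPred < i + 1 := by
  have := ht.2 (i + 1) (by omega) (by omega)
  rw [nthSeq_succ t hi] at this
  rw [PNat.natPred]
  omega

def encodeBSet (t : BSet) : Σ n, ∀ i : Fin n, Fin (i + 1) :=
  ⟨t.1.length, fun i => ⟨t.1[(i : ℕ)].natPred, natPred_getElem_lt_of_mem_BSet t.2 i.isLt⟩⟩

lemma decodeBSet_encodeBSet (t : BSet) : decodeBSet (encodeBSet t) = t.1 := by
  refine List.ext_getElem (List.length_ofFn ..) fun i _ _ => ?_
  simp only [decodeBSet, encodeBSet, List.getElem_ofFn, PNat.succPNat_natPred]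

lemma encodeBSet_injective : Function.Injective encodeBSet := fun a b hab => Subtype.ext <| by
  rw [← decodeBSet_encodeBSet a, ← decodeBSet_encodeBSet b, hab]

lemma summable_lam_length_BSet : Summable fun t : BSet => lam t.1.length :=
  (summable_lam_fst.comp_injective encodeBSet_injective :)

lemma summable_tau (s : List ℕ+) :
    Summable fun t : {t : List ℕ+ // t ∈ BSet ∧ slt t s} => lam t.1.length :=
  summable_lam_length_BSet.comp_injective
    (i := fun t : {t : List ℕ+ // t ∈ BSet ∧ slt t s} => (⟨t.1, t.2.1⟩ : BSet))
    fun _ _ h => Subtype.ext (congrArg Subtype.val h :)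

theorem tau_monotone : Monotone tau := by
  intro t t' htt'
  refine (summable_tau t).tsum_le_tsum_of_inj
    (fun u => ⟨u.1, u.2.1, slt_iff_lt.mpr ((slt_iff_lt.mp u.2.2).trans_le htt')⟩)
    (fun _ _ h => Subtype.ext (congrArg Subtype.val h :))
    (fun _ _ => lam_nonneg _) (fun _ => le_rfl) (summable_tau t')

theorem Set.Icc_inter_Icc_eq_empty_or_singleton_of_le {α : Type*} [LinearOrder α]
    {a b c d : α} (hab : a ≤ b) (hbc : b ≤ c) (hcd : c ≤ d) :
    Icc a b ∩ Icc c d = ∅ ∨ Icc a b ∩ Icc c d = {c} := by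
  rcases hbc.eq_or_lt with rfl | hlt
  · exact .inr (Icc_inter_Icc_eq_singleton hab hcd)
  · exact .inl (eq_empty_of_forall_notMem fun x ⟨⟨_, hxb⟩, hcx, _⟩ =>
      (hxb.trans_lt hlt).not_ge hcx)

theorem Icc_inter_Icc_eq_empty_or_singleton_general (s s' : List ℕ+) (h : slt s s') :
    Set.Icc (tau s) (tau (s ++ [1])) ∩ Set.Icc (tau s') (tau (s' ++ [1])) = ∅ ∨
    Set.Icc (tau s) (tau (s ++ [1])) ∩ Set.Icc (tau s') (tau (s' ++ [1])) = {tau s'} :=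
  Set.Icc_inter_Icc_eq_empty_or_singleton_of_le
    (tau_monotone (List.le_self_append s [1]))
    (tau_monotone (append_one_le_of_lt (slt_iff_lt.mp h)))
    (tau_monotone (List.le_self_append s' [1]))

/-- For all `s, s' ∈ B` with `s ≺ s'`, the intersection
`[τ s, τ (s + ⟨1⟩)] ∩ [τ s', τ (s' + ⟨1⟩)]` is either empty or the singleton `{τ s'}`. -/
theorem Icc_inter_Icc_eq_empty_or_singleton (s s' : List ℕ+)
    (hs : s ∈ BSet) (hs' : s' ∈ BSet) (h : slt s s') :
    Set.Icc (tau s) (tau (s ++ [1])) ∩ Set.Icc (tau s') (tau (s' ++ [1])) = ∅ ∨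
    Set.Icc (tau s) (tau (s ++ [1])) ∩ Set.Icc (tau s') (tau (s' ++ [1])) = {tau s'} :=
  Icc_inter_Icc_eq_empty_or_singleton_general s s' h
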